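/- arXiv:1601.00065 — 3 statements merged into one kernel-verified Lean document; each statement's English description precedes it below -/
import Mathlib

section
/- The complete bipartite graph K_{3,3} is not planar: K_{3,3} is not a subcomplex of any triangulation of the 2-sphere. -/
/-- A (finite, abstract) simplicial complex: a finite family of nonempty finite
vertex sets (faces), closed under passing to nonempty subsets. -/
def SC (K : Finset (Finset ℕ)) : Prop :=
  ∅ ∉ K ∧ ∀ s ∈ K, ∀ t : Finset ℕ, t ⊆ s → t ≠ ∅ → t ∈ K

/-- `fv K i` is the number of `i`-dimensional faces of `K` (faces with `i+1` vertices). -/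
def fv (K : Finset (Finset ℕ)) (i : ℕ) : ℕ :=
  (K.filter (fun s => s.card = i + 1)).card

/-- The link of a vertex `v` in `K`. -/
def link (K : Finset (Finset ℕ)) (v : ℕ) : Finset (Finset ℕ) :=
  K.filter (fun s => v ∉ s ∧ insert v s ∈ K)

/-- The `n`-cycle complex on the vertices `g 0, …, g (n-1)` (in this cyclic order). -/
def cycleOn (n : ℕ) (g : ℕ → ℕ) : Finset (Finset ℕ) :=
  (Finset.range n).image (fun i => ({g i} : Finset ℕ)) ∪
    (Finset.range n).image (fun i => ({g i, g ((i + 1) % n)} : Finset ℕ))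

/-- `C` is an `n`-cycle for some `n ≥ 3`. -/
def IsCycleComplex (C : Finset (Finset ℕ)) : Prop :=
  ∃ n g, 3 ≤ n ∧ Set.InjOn g (Set.Iio n) ∧ C = cycleOn n g

/-- The path complex on the vertices `g 0, …, g (n-1)` (in this order). -/
def pathOn (n : ℕ) (g : ℕ → ℕ) : Finset (Finset ℕ) :=
  (Finset.range n).image (fun i => ({g i} : Finset ℕ)) ∪
    (Finset.range (n - 1)).image (fun i => ({g i, g (i + 1)} : Finset ℕ))

/-- `C` is a path with at least one edge. -/
def IsPathComplex (C : Finset (Finset ℕ)) : Prop :=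
  ∃ n g, 2 ≤ n ∧ Set.InjOn g (Set.Iio n) ∧ C = pathOn n g

/-- Connectedness of a complex: any two vertices are joined by an edge path. -/
def Conn (K : Finset (Finset ℕ)) : Prop :=
  ∀ u v : ℕ, ({u} : Finset ℕ) ∈ K → ({v} : Finset ℕ) ∈ K →
    Relation.ReflTransGen (fun a b => ({a, b} : Finset ℕ) ∈ K) u v

/-- A triangulated closed (connected) 2-manifold: a nonempty connected 2-dimensional
simplicial complex in which the link of every vertex is a cycle. -/
def Surface2 (K : Finset (Finset ℕ)) : Prop :=
  SC K ∧ K ≠ ∅ ∧ (∀ s ∈ K, s.card ≤ 3) ∧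
    (∀ v : ℕ, ({v} : Finset ℕ) ∈ K → IsCycleComplex (link K v)) ∧ Conn K

/-- Neighbourly: any two vertices form an edge. -/
def Neighbourly (K : Finset (Finset ℕ)) : Prop :=
  ∀ u v : ℕ, ({u} : Finset ℕ) ∈ K → ({v} : Finset ℕ) ∈ K → u ≠ v →
    ({u, v} : Finset ℕ) ∈ K

/-- A triangulation of the 2-sphere: a triangulated closed connected 2-manifold
with Euler characteristic 2. -/
def TriS2 (K : Finset (Finset ℕ)) : Prop :=
  Surface2 K ∧ fv K 0 + fv K 2 = fv K 1 + 2

/-- The simplicial complex generated by a family of faces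
(all nonempty subsets of the given faces). -/
def sclosure (ts : Finset (Finset ℕ)) : Finset (Finset ℕ) :=
  ts.biUnion (fun t => t.powerset.erase ∅)

/-- `K` is isomorphic to `L` via a vertex relabelling. -/
def IsoTo (K L : Finset (Finset ℕ)) : Prop :=
  ∃ g : ℕ → ℕ, Function.Injective g ∧ K.image (Finset.image g) = L

/-- Boundary complex of the tetrahedron: all proper nonempty subsets of {0,1,2,3}. -/
def TetraB : Finset (Finset ℕ) :=
  sclosure {{0, 1, 2}, {0, 1, 3}, {0, 2, 3}, {1, 2, 3}}

/-- The complete bipartite graph `K₃,₃`, as a 1-dimensional simplicial complex with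
parts `{0,1,2}` and `{3,4,5}`. -/
def K33 : Finset (Finset ℕ) :=
  sclosure {{0, 3}, {0, 4}, {0, 5}, {1, 3}, {1, 4}, {1, 5}, {2, 3}, {2, 4}, {2, 5}}

/-
Let `L` be a graph drawn in a triangulated sphere `K`. The faces of the drawing are the classes
of triangles of `K` joined by crossing edges not in `L`. Over `ZMod 2`, a 2-chain whose boundary
vanishes off `L` is constant on faces, and the stars of the vertices outside `L` are independent
relations among the rows (edges outside `L`) of the boundary matrix; a rank count together with
`V - E + F = 2` for `K` gives Euler's inequality `#faces ≥ E(L) - V(L) + 2`. If `L` is bipartite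
and has at least two faces, the boundary of each face is a nonzero even subgraph of `L`, so it
has at least four edges, while each edge of `L` borders at most two faces: `4 #faces ≤ 2 E(L)`.
Hence `E(L) ≤ 2 V(L) - 4`, which fails for `K₃,₃` (`9 > 8`).
-/

open Finset Matrix

section Generic

lemma Finset.card_filter_coe_sort {α : Type*} (s : Finset α) (p : α → Prop) [DecidablePred p] :
    #{x : s | p x.1} = #{x ∈ s | p x} := by
  rw [card_filter, card_filter]
  exact sum_coe_sort s fun x => if p x then 1 else 0

lemma Relation.ReflTransGen.exists_rel_of_not {α : Type*} {r : α → α → Prop} {p : α → Prop}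
    {a b : α} (h : Relation.ReflTransGen r a b) (ha : p a) (hb : ¬p b) :
    ∃ x y, r x y ∧ p x ∧ ¬p y := by
  induction h with
  | refl => exact absurd ha hb
  | @tail c d _ hcd ih =>
    by_cases hc : p c
    exacts [⟨c, d, hcd, hc, hb⟩, ih hc]

lemma ZMod.two_eq_ite (a : ZMod 2) : a = if a ≠ 0 then 1 else 0 := by
  revert a
  decide

end Generic

section Complex

variable {K : Finset (Finset ℕ)}

def faces (K : Finset (Finset ℕ)) (k : ℕ) : Finset (Finset ℕ) := {s ∈ K | s.card = k + 1}

lemma fv_eq_card_faces (K : Finset (Finset ℕ)) (k : ℕ) : fv K k = #(faces K k) := rfl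

lemma mem_faces {k : ℕ} {s : Finset ℕ} : s ∈ faces K k ↔ s ∈ K ∧ s.card = k + 1 := mem_filter

lemma SC.mem_of_subset (hK : SC K) {s t : Finset ℕ} (hs : s ∈ K) (hts : t ⊆ s)
    (ht : t.Nonempty) : t ∈ K :=
  hK.2 s hs t hts ht.ne_empty

lemma SC.image (hK : SC K) (g : ℕ → ℕ) : SC (K.image (image g)) := by
  refine ⟨fun h => ?_, fun s hs t hts ht => ?_⟩
  · obtain ⟨s, hs, hse⟩ := mem_image.1 h
    exact hK.1 (image_eq_empty.1 hse ▸ hs)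
  · obtain ⟨s₀, hs₀, rfl⟩ := mem_image.1 hs
    obtain ⟨t₀, ht₀, rfl⟩ := subset_image_iff.1 hts
    exact mem_image_of_mem _ (hK.2 s₀ hs₀ t₀ ht₀ (by simpa using ht))

lemma fv_image {g : ℕ → ℕ} (hg : Function.Injective g) (k : ℕ) :
    fv (K.image (image g)) k = fv K k := by
  rw [fv, fv, filter_image, card_image_of_injective _ (image_injective hg)]
  congr 2
  ext s
  simp [card_image_of_injective _ hg]

def IsProperColouring (L : Finset (Finset ℕ)) (col : ℕ → Bool) : Prop :=
  ∀ e ∈ L, ∀ x ∈ e, ∀ x' ∈ e, col x = col x' → x = x'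

def boundaryMatrix (K : Finset (Finset ℕ)) (k : ℕ) :
    Matrix (faces K k) (faces K (k + 1)) (ZMod 2) :=
  Matrix.of fun s t => if s.1 ⊆ t.1 then 1 else 0

lemma boundaryMatrix_mulVec_apply {k : ℕ} (z : faces K (k + 1) → ZMod 2) (s : faces K k) :
    (boundaryMatrix K k *ᵥ z) s = ∑ t with s.1 ⊆ t.1, z t := by
  simp [Matrix.mulVec, dotProduct, boundaryMatrix, sum_filter]

lemma SC.card_filter_between (hK : SC K) {s t : Finset ℕ} (ht : t ∈ K) (hst : s ⊆ t) :
    #{e ∈ K | e.card = s.card + 1 ∧ s ⊆ e ∧ e ⊆ t} = #(t \ s) := by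
  have : {e ∈ K | e.card = s.card + 1 ∧ s ⊆ e ∧ e ⊆ t} = (t \ s).image (insert · s) := by
    ext e
    simp only [mem_filter, mem_image, mem_sdiff]
    constructor
    · rintro ⟨-, hc, hse, het⟩
      obtain ⟨x, hx⟩ := card_eq_one.1 (show #(e \ s) = 1 by rw [card_sdiff_of_subset hse]; omega)
      have hxe : x ∈ e \ s := hx ▸ mem_singleton_self x
      refine ⟨x, ⟨het (mem_sdiff.1 hxe).1, (mem_sdiff.1 hxe).2⟩, ?_⟩
      rw [insert_eq, ← hx, sdiff_union_of_subset hse]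
    · rintro ⟨x, ⟨hxt, hxs⟩, rfl⟩
      have hsub : insert x s ⊆ t := insert_subset hxt hst
      exact ⟨hK.mem_of_subset ht hsub (insert_nonempty x s), card_insert_of_notMem hxs,
        subset_insert x s, hsub⟩
  rw [this, card_image_of_injOn]
  intro x hx y hy hxy
  have := congrArg (x ∈ ·) hxy
  simp only [mem_insert, true_or, eq_iff_iff, true_iff] at this
  rcases this with h | h
  · exact h
  · exact absurd h (mem_sdiff.1 (mem_coe.1 hx)).2

lemma boundaryMatrix_mul_boundaryMatrix (hK : SC K) (k : ℕ) :
    boundaryMatrix K k * boundaryMatrix K (k + 1) = 0 := by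
  ext s t
  obtain ⟨-, hs⟩ := mem_faces.1 s.2
  obtain ⟨ht, htc⟩ := mem_faces.1 t.2
  have hsum : (boundaryMatrix K k * boundaryMatrix K (k + 1)) s t =
      (#{e ∈ K | e.card = s.1.card + 1 ∧ s.1 ⊆ e ∧ e ⊆ t.1} : ZMod 2) := by
    simp only [Matrix.mul_apply, boundaryMatrix, Matrix.of_apply, mul_ite, mul_one, mul_zero,
      ← ite_and]
    rw [sum_coe_sort (faces K (k + 1)) fun e => if e ⊆ t.1 ∧ s.1 ⊆ e then 1 else 0, sum_boole]
    congr 2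
    ext e
    simp only [faces, mem_filter, hs]
    tauto
  rw [hsum, Matrix.zero_apply]
  by_cases hst : s.1 ⊆ t.1
  · rw [hK.card_filter_between ht hst, card_sdiff_of_subset hst, htc, hs,
      show k + 1 + 1 + 1 - (k + 1) = 2 by omega]
    rfl
  · rw [filter_false_of_mem fun e _ h => hst (h.2.1.trans h.2.2), card_empty, Nat.cast_zero]

lemma mem_link {u : ℕ} {s : Finset ℕ} : s ∈ link K u ↔ s ∈ K ∧ u ∉ s ∧ insert u s ∈ K := by
  simp [link]

lemma insert_mem_faces_of_mem_link {u : ℕ} {f : Finset ℕ} (hf : f ∈ link K u)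
    (hc : f.card = 2) : insert u f ∈ faces K 2 :=
  mem_faces.2 ⟨(mem_link.1 hf).2.2, by rw [card_insert_of_notMem (mem_link.1 hf).2.1, hc]⟩

lemma SC.erase_mem_link (hK : SC K) {u : ℕ} {t : Finset ℕ} (ht : t ∈ K) (hu : u ∈ t)
    (hne : (t.erase u).Nonempty) : t.erase u ∈ link K u :=
  mem_link.2 ⟨hK.mem_of_subset ht (erase_subset u t) hne, notMem_erase u t,
    by rwa [insert_erase hu]⟩

lemma SC.singleton_mem_link (hK : SC K) {u x : ℕ} (hux : u ≠ x) (he : {u, x} ∈ K) :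
    {x} ∈ link K u :=
  mem_link.2 ⟨hK.mem_of_subset he (by simp) (singleton_nonempty x), by simpa using hux, he⟩

end Complex

section Cycle

variable {n : ℕ} {h : ℕ → ℕ}

lemma succ_mod_eq {i : ℕ} (hi : i < n) : (i + 1) % n = if i + 1 = n then 0 else i + 1 := by
  split_ifs with hin
  · rw [hin, Nat.mod_self]
  · exact Nat.mod_eq_of_lt (by omega)

lemma mem_cycleOn {f : Finset ℕ} :
    f ∈ cycleOn n h ↔ ∃ i < n, f = {h i} ∨ f = {h i, h ((i + 1) % n)} := by
  simp only [cycleOn, mem_union, mem_image, mem_range]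
  constructor
  · rintro (⟨i, hi, rfl⟩ | ⟨i, hi, rfl⟩)
    exacts [⟨i, hi, .inl rfl⟩, ⟨i, hi, .inr rfl⟩]
  · rintro ⟨i, hi, rfl | rfl⟩
    exacts [.inl ⟨i, hi, rfl⟩, .inr ⟨i, hi, rfl⟩]

lemma exists_eq_of_singleton_mem_cycleOn {x : ℕ} (hx : {x} ∈ cycleOn n h) :
    ∃ j < n, x = h j := by
  obtain ⟨i, hi, hxi | hxi⟩ := mem_cycleOn.1 hx
  · exact ⟨i, hi, singleton_inj.1 hxi⟩
  · exact ⟨i, hi, (mem_singleton.1 (hxi ▸ mem_insert_self _ _)).symm⟩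

lemma mem_cycleOn_of_card_eq_two {f : Finset ℕ} (hf : f ∈ cycleOn n h) (hc : f.card = 2) :
    ∃ i < n, f = {h i, h ((i + 1) % n)} := by
  obtain ⟨i, hi, rfl | rfl⟩ := mem_cycleOn.1 hf
  · simp at hc
  · exact ⟨i, hi, rfl⟩

variable (hn : 3 ≤ n) (hh : Set.InjOn h (Set.Iio n))
include hn hh

lemma apply_ne_apply_succ_mod {i : ℕ} (hi : i < n) : h i ≠ h ((i + 1) % n) := fun e => by
  have hsi := succ_mod_eq hi
  have := hh hi (Nat.mod_lt _ (by omega)) e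
  split_ifs at hsi <;> omega

lemma filter_cycleOn_mem_eq {j p : ℕ} (hj : j < n) (hp : p < n) (hpj : (p + 1) % n = j) :
    {f ∈ cycleOn n h | f.card = 2 ∧ h j ∈ f} = {{h p, h j}, {h j, h ((j + 1) % n)}} := by
  ext f
  simp only [mem_filter, mem_insert, mem_singleton]
  constructor
  · rintro ⟨hf, hc, hjf⟩
    obtain ⟨i, hi, rfl⟩ := mem_cycleOn_of_card_eq_two hf hc
    rcases mem_insert.1 hjf with hji | hji
    · rw [hh hj hi hji]
      exact .inr rfl
    · have hij := hh hj (Nat.mod_lt _ (by omega)) (mem_singleton.1 hji)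
      have hsi := succ_mod_eq hi
      have hsp := succ_mod_eq hp
      obtain rfl : i = p := by split_ifs at hsi hsp <;> omega
      rw [← hij]
      exact .inl rfl
  · rintro (rfl | rfl)
    · exact ⟨mem_cycleOn.2 ⟨p, hp, .inr (by rw [hpj])⟩,
        card_pair (hpj ▸ apply_ne_apply_succ_mod hn hh hp), by simp⟩
    · exact ⟨mem_cycleOn.2 ⟨j, hj, .inr rfl⟩, card_pair (apply_ne_apply_succ_mod hn hh hj),
        by simp⟩

lemma card_filter_cycleOn_mem {j : ℕ} (hj : j < n) :
    #{f ∈ cycleOn n h | f.card = 2 ∧ h j ∈ f} = 2 := by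
  obtain ⟨p, hp, hpj⟩ : ∃ p < n, (p + 1) % n = j := by
    rcases j with _ | j
    · exact ⟨n - 1, by omega, by rw [Nat.sub_add_cancel (by omega), Nat.mod_self]⟩
    · exact ⟨j, by omega, Nat.mod_eq_of_lt hj⟩
  rw [filter_cycleOn_mem_eq hn hh hj hp hpj, card_pair]
  intro e
  have : h p ∈ ({h j, h ((j + 1) % n)} : Finset ℕ) := e ▸ mem_insert_self _ _
  rcases mem_insert.1 this with e' | e'
  · exact (hpj ▸ apply_ne_apply_succ_mod hn hh hp) e'
  · have := hh hp (Nat.mod_lt _ (by omega)) (mem_singleton.1 e')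
    have hsj := succ_mod_eq hj
    have hsp := succ_mod_eq hp
    split_ifs at hsj hsp <;> omega

end Cycle

lemma SC.exists_eq_insert_of_link_eq_cycleOn {K : Finset (Finset ℕ)} (hK : SC K) {u n : ℕ}
    {h : ℕ → ℕ} (hlink : link K u = cycleOn n h) {s : Finset ℕ} (hs : s ∈ faces K 2)
    (hu : u ∈ s) : ∃ i < n, s = insert u {h i, h ((i + 1) % n)} := by
  obtain ⟨hsK, hsc⟩ := mem_faces.1 hs
  have hsl : s.erase u ∈ link K u := hK.erase_mem_link hsK hu (by
    rw [← card_pos, card_erase_of_mem hu, hsc]; norm_num)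
  obtain ⟨i, hi, hei⟩ := mem_cycleOn_of_card_eq_two (hlink ▸ hsl)
    (by rw [card_erase_of_mem hu, hsc])
  exact ⟨i, hi, by rw [← hei, insert_erase hu]⟩

section Surface

variable {K L : Finset (Finset ℕ)}

/-- The faces of the drawing of `L` in `K` are the connected components of this graph. -/
def dualGraph (K L : Finset (Finset ℕ)) : SimpleGraph (faces K 2) :=
  SimpleGraph.fromRel fun t t' => ∃ e ∈ faces K 1, e ∉ L ∧ e ⊆ t.1 ∧ e ⊆ t'.1

lemma dualGraph_reachable {t t' : faces K 2} {e : Finset ℕ} (he : e ∈ faces K 1) (heL : e ∉ L)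
    (ht : e ⊆ t.1) (ht' : e ⊆ t'.1) : (dualGraph K L).Reachable t t' := by
  by_cases htt : t = t'
  · exact htt ▸ SimpleGraph.Reachable.refl _
  · exact ((SimpleGraph.fromRel_adj _ _ _).2 ⟨htt, .inl ⟨e, he, heL, ht, ht'⟩⟩).reachable

namespace Surface2

variable (hS : Surface2 K)
include hS

lemma isCycleComplex_link {u : ℕ} (hu : {u} ∈ K) : IsCycleComplex (link K u) := hS.2.2.2.1 u hu

lemma conn : Conn K := hS.2.2.2.2

lemma card_filter_superset_eq_two (e : faces K 1) : #{t : faces K 2 | e.1 ⊆ t.1} = 2 := by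
  rw [card_filter_coe_sort]
  obtain ⟨heK, hc⟩ := mem_faces.1 e.2
  obtain ⟨u, w, huw, he⟩ := card_eq_two.1 hc
  rw [he] at heK ⊢
  obtain ⟨n, h, hn, hh, hlink⟩ :=
    hS.isCycleComplex_link (hS.1.mem_of_subset heK (by simp) (singleton_nonempty u))
  have hw := hS.1.singleton_mem_link huw heK
  rw [hlink] at hw
  obtain ⟨j, hj, rfl⟩ := exists_eq_of_singleton_mem_cycleOn hw
  calc #{t ∈ faces K 2 | {u, h j} ⊆ t} = #{f ∈ link K u | f.card = 2 ∧ h j ∈ f} := by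
        refine card_nbij' (·.erase u) (insert u) ?_ ?_ ?_ ?_
        · intro t ht
          rw [mem_coe, mem_filter, mem_faces] at ht
          obtain ⟨⟨htK, htc⟩, hut⟩ := ht
          have hu : u ∈ t := hut (mem_insert_self u _)
          have hw : h j ∈ t.erase u := mem_erase.2 ⟨huw.symm, hut (by simp)⟩
          rw [mem_coe, mem_filter]
          exact ⟨hS.1.erase_mem_link htK hu ⟨_, hw⟩, by rw [card_erase_of_mem hu, htc], hw⟩
        · intro f hf
          obtain ⟨hf, hfc, hwf⟩ := mem_filter.1 (mem_coe.1 hf)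
          rw [mem_coe, mem_filter]
          exact ⟨insert_mem_faces_of_mem_link hf hfc,
            insert_subset_insert u (singleton_subset_iff.2 hwf)⟩
        · intro t ht
          exact insert_erase ((mem_filter.1 ht).2 (mem_insert_self u _))
        · intro f hf
          exact erase_insert (mem_link.1 (mem_filter.1 hf).1).2.1
    _ = 2 := by rw [hlink]; exact card_filter_cycleOn_mem hn hh hj

lemma filter_superset_eq_pair {e : faces K 1} {t t' : faces K 2} (htt : t ≠ t')
    (ht : e.1 ⊆ t.1) (ht' : e.1 ⊆ t'.1) : ({s | e.1 ⊆ s.1} : Finset (faces K 2)) = {t, t'} :=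
  (eq_of_subset_of_card_le (by simp [insert_subset_iff, ht, ht'])
    (by rw [card_pair htt, hS.card_filter_superset_eq_two])).symm

lemma apply_eq_of_reachable {z : faces K 2 → ZMod 2}
    (hz : ∀ e : faces K 1, e.1 ∉ L → (boundaryMatrix K 1 *ᵥ z) e = 0) {t t' : faces K 2}
    (htt : (dualGraph K L).Reachable t t') : z t = z t' := by
  rw [SimpleGraph.reachable_iff_reflTransGen] at htt
  induction htt with
  | refl => rfl
  | tail _ hadj ih =>
    rw [ih]
    obtain ⟨hne, ⟨e, he, heL, h1, h2⟩ | ⟨e, he, heL, h2, h1⟩⟩ :=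
      (SimpleGraph.fromRel_adj _ _ _).1 hadj
    all_goals
      have := hz ⟨e, he⟩ heL
      rwa [boundaryMatrix_mulVec_apply, hS.filter_superset_eq_pair hne h1 h2, sum_pair hne,
        CharTwo.add_eq_zero] at this

lemma exists_faces_two_of_mem_link {u x : ℕ} (hx : {x} ∈ link K u) :
    ∃ t : faces K 2, u ∈ t.1 ∧ x ∈ t.1 := by
  have hu : {u} ∈ K :=
    hS.1.mem_of_subset (mem_link.1 hx).2.2 (by simp) (singleton_nonempty u)
  obtain ⟨n, h, hn, hh, hlink⟩ := hS.isCycleComplex_link hu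
  rw [hlink] at hx
  obtain ⟨j, hj, rfl⟩ := exists_eq_of_singleton_mem_cycleOn hx
  obtain ⟨f, hf⟩ := card_pos.1 (by rw [card_filter_cycleOn_mem hn hh hj]; norm_num)
  obtain ⟨hf, hfc, hjf⟩ := mem_filter.1 hf
  rw [← hlink] at hf
  exact ⟨⟨_, insert_mem_faces_of_mem_link hf hfc⟩, mem_insert_self u f, mem_insert_of_mem hjf⟩

lemma reachable_of_mem_of_mem {u : ℕ} {t t' : faces K 2} (ht : u ∈ t.1) (ht' : u ∈ t'.1) :
    (dualGraph K ∅).Reachable t t' := by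
  have hu : {u} ∈ K := hS.1.mem_of_subset (mem_faces.1 t.2).1 (by simpa) (singleton_nonempty u)
  obtain ⟨n, h, hn, hh, hlink⟩ := hS.isCycleComplex_link hu
  have hlinkEdge : ∀ i < n, {h i, h ((i + 1) % n)} ∈ link K u :=
    fun i hi => hlink ▸ mem_cycleOn.2 ⟨i, hi, .inr rfl⟩
  have tri : ∀ i < n, insert u {h i, h ((i + 1) % n)} ∈ faces K 2 := fun i hi =>
    insert_mem_faces_of_mem_link (hlinkEdge i hi) (card_pair (apply_ne_apply_succ_mod hn hh hi))
  have index : ∀ s : faces K 2, u ∈ s.1 → ∃ i, ∃ hi : i < n, s = ⟨_, tri i hi⟩ := fun s hs => by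
    obtain ⟨i, hi, hsi⟩ := hS.1.exists_eq_insert_of_link_eq_cycleOn hlink s.2 hs
    exact ⟨i, hi, Subtype.ext hsi⟩
  have walk : ∀ i (hi : i < n), (dualGraph K ∅).Reachable ⟨_, tri 0 (by omega)⟩ ⟨_, tri i hi⟩ := by
    intro i
    induction i with
    | zero => exact fun _ => SimpleGraph.Reachable.refl _
    | succ i ih =>
      intro hi
      refine (ih (by omega)).trans
        (dualGraph_reachable (e := {u, h (i + 1)}) ?_ (notMem_empty _) ?_ ?_)
      · have hu' : u ∉ ({h (i + 1), h ((i + 1 + 1) % n)} : Finset ℕ) :=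
          (mem_link.1 (hlinkEdge (i + 1) hi)).2.1
        refine mem_faces.2 ⟨hS.1.mem_of_subset (mem_faces.1 (tri (i + 1) hi)).1 ?_
          (insert_nonempty _ _), card_pair fun e => hu' (e ▸ mem_insert_self _ _)⟩
        exact insert_subset_insert u (by simp)
      · simp [Nat.mod_eq_of_lt hi]
      · exact insert_subset_insert u (by simp)
  obtain ⟨i, hi, rfl⟩ := index t ht
  obtain ⟨i', hi', rfl⟩ := index t' ht'
  exact (walk i hi).symm.trans (walk i' hi')

lemma dualGraph_preconnected : (dualGraph K ∅).Preconnected := by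
  have vertex : ∀ s : faces K 2, ∃ u ∈ s.1, {u} ∈ K := fun s => by
    obtain ⟨hsK, hsc⟩ := mem_faces.1 s.2
    obtain ⟨u, hu⟩ := card_pos.1 (by rw [hsc]; norm_num)
    exact ⟨u, hu, hS.1.mem_of_subset hsK (singleton_subset_iff.2 hu) (singleton_nonempty u)⟩
  intro t t'
  obtain ⟨u, hut, hu⟩ := vertex t
  obtain ⟨u', hut', hu'⟩ := vertex t'
  suffices ∀ w, Relation.ReflTransGen (fun a b => ({a, b} : Finset ℕ) ∈ K) u w →
      ∀ s : faces K 2, w ∈ s.1 → (dualGraph K ∅).Reachable t s from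
    this u' (hS.conn u u' hu hu') t' hut'
  intro w hw
  induction hw with
  | refl => exact fun s hs => hS.reachable_of_mem_of_mem hut hs
  | @tail a b _ hab ih =>
    intro s hs
    by_cases hba : a = b
    · exact ih s (hba ▸ hs)
    · obtain ⟨r, hra, hrb⟩ := hS.exists_faces_two_of_mem_link (hS.1.singleton_mem_link hba hab)
      exact (ih r hra).trans (hS.reachable_of_mem_of_mem hrb hs)

end Surface2

end Surface

section LowerBound

variable {K L : Finset (Finset ℕ)}

lemma card_subtype_notMem_add_fv (hLK : L ⊆ K) (k : ℕ) :
    Fintype.card {s : faces K k // s.1 ∉ L} + fv L k = fv K k := by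
  rw [Fintype.card_subtype, card_filter_coe_sort (faces K k) (· ∉ L),
    fv_eq_card_faces K, ← card_filter_add_card_filter_not (s := faces K k) (· ∈ L), add_comm]
  congr 2
  rw [fv_eq_card_faces]
  congr 1
  ext s
  simp only [faces, mem_filter]
  exact ⟨fun h => ⟨⟨hLK h.1, h.2⟩, h.1⟩, fun h => ⟨h.2, h.1.2⟩⟩

variable (K L) in
def edgeTriangleMatrix : Matrix {e : faces K 1 // e.1 ∉ L} (faces K 2) (ZMod 2) :=
  (boundaryMatrix K 1).submatrix Subtype.val id

variable (K L) in
def vertexEdgeMatrix :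
    Matrix {v : faces K 0 // v.1 ∉ L} {e : faces K 1 // e.1 ∉ L} (ZMod 2) :=
  (boundaryMatrix K 0).submatrix Subtype.val Subtype.val

lemma vertexEdgeMatrix_mul_edgeTriangleMatrix (hK : SC K) (hL : SC L) :
    vertexEdgeMatrix K L * edgeTriangleMatrix K L = 0 := by
  ext v t
  have h0 := congrFun (congrFun (boundaryMatrix_mul_boundaryMatrix hK 0) v.1) t
  rw [Matrix.mul_apply, ← Fintype.sum_subtype_add_sum_subtype (fun e : faces K 1 => e.1 ∉ L)] at h0
  have hv : v.1.1.Nonempty := card_pos.1 (by rw [(mem_faces.1 v.1.2).2]; norm_num)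
  have hLterms : ∑ e : {e : faces K 1 // ¬e.1 ∉ L},
      boundaryMatrix K 0 v.1 e.1 * boundaryMatrix K 1 e.1 t = 0 := by
    refine sum_eq_zero fun e _ => ?_
    have : ¬v.1.1 ⊆ e.1.1 := fun hve => v.2 (hL.mem_of_subset (not_not.1 e.2) hve hv)
    simp [boundaryMatrix, this]
  rw [Matrix.zero_apply, hLterms, add_zero] at h0
  exact h0

lemma linearIndependent_row_vertexEdgeMatrix (hconn : Conn K) (hL : SC L) (hLK : L ⊆ K)
    {w : ℕ} (hw : {w} ∈ L) : LinearIndependent (ZMod 2) (vertexEdgeMatrix K L).row := by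
  rw [Fintype.linearIndependent_iff]
  intro c hc v₀
  by_contra hv₀
  let p : ℕ → Prop := fun x => ∃ v : {v : faces K 0 // v.1 ∉ L}, v.1.1 = {x} ∧ c v ≠ 0
  obtain ⟨a₀, ha₀⟩ := card_eq_one.1 (mem_faces.1 v₀.1.2).2
  obtain ⟨a, b, hab, ⟨va, hva, hca⟩, hpb⟩ :=
    (hconn a₀ w (ha₀ ▸ (mem_faces.1 v₀.1.2).1) (hLK hw)).exists_rel_of_not
      (p := p) ⟨v₀, ha₀, hv₀⟩ fun ⟨v, hv, _⟩ => v.2 (hv ▸ hw)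
  have hne : a ≠ b := fun h => hpb (h ▸ ⟨va, hva, hca⟩)
  have heL : ({a, b} : Finset ℕ) ∉ L := fun h =>
    va.2 (hva ▸ hL.mem_of_subset h (by simp) (singleton_nonempty a))
  let e : {e : faces K 1 // e.1 ∉ L} := ⟨⟨{a, b}, mem_faces.2 ⟨hab, card_pair hne⟩⟩, heL⟩
  have he := congrFun hc e
  rw [Finset.sum_apply, sum_eq_single va] at he
  · simp [vertexEdgeMatrix, boundaryMatrix, Matrix.row, e, hva, hca] at he
  · intro v _ hv
    obtain ⟨x, hx⟩ := card_eq_one.1 (mem_faces.1 v.1.2).2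
    by_cases hsub : v.1.1 ⊆ {a, b}
    · rw [hx, singleton_subset_iff, mem_insert, mem_singleton] at hsub
      rcases hsub with rfl | rfl
      · exact absurd (Subtype.ext (Subtype.ext (hx.trans hva.symm))) hv
      · rw [not_not.1 fun h => hpb ⟨v, hx, h⟩, zero_smul, Pi.zero_apply]
    · simp [vertexEdgeMatrix, boundaryMatrix, Matrix.row, e, hsub]
  · simp

lemma Surface2.finrank_ker_edgeTriangleMatrix_le (hS : Surface2 K) :
    Module.finrank (ZMod 2) (LinearMap.ker (edgeTriangleMatrix K L).mulVecLin) ≤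
      Nat.card (dualGraph K L).ConnectedComponent := by
  classical
  let pull := LinearMap.funLeft (ZMod 2) (ZMod 2) (dualGraph K L).connectedComponentMk
  calc _ ≤ Module.finrank (ZMod 2) (LinearMap.range pull) := Submodule.finrank_mono ?_
    _ ≤ Module.finrank (ZMod 2) ((dualGraph K L).ConnectedComponent → ZMod 2) :=
      LinearMap.finrank_range_le _
    _ = _ := by rw [Module.finrank_fintype_fun_eq_card, Nat.card_eq_fintype_card]
  intro z hz
  have hz' : ∀ e : faces K 1, e.1 ∉ L → (boundaryMatrix K 1 *ᵥ z) e = 0 :=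
    fun e he => congrFun (LinearMap.mem_ker.1 hz) ⟨e, he⟩
  exact ⟨SimpleGraph.ConnectedComponent.lift z fun t t' p _ =>
    hS.apply_eq_of_reachable hz' p.reachable, rfl⟩

theorem TriS2.fv_one_add_two_le (hK : TriS2 K) (hL : SC L) (hLK : L ⊆ K) {w : ℕ}
    (hw : {w} ∈ L) : fv L 1 + 2 ≤ Nat.card (dualGraph K L).ConnectedComponent + fv L 0 := by
  have hrank := rank_add_rank_le_card_of_mul_eq_zero
    (vertexEdgeMatrix_mul_edgeTriangleMatrix hK.1.1 hL)
  rw [(linearIndependent_row_vertexEdgeMatrix hK.1.conn hL hLK hw).rank_matrix] at hrank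
  have hker := LinearMap.finrank_range_add_finrank_ker (edgeTriangleMatrix K L).mulVecLin
  rw [Module.finrank_fintype_fun_eq_card, Fintype.card_coe, ← fv_eq_card_faces] at hker
  have hfaces := hK.1.finrank_ker_edgeTriangleMatrix_le (L := L)
  have hV := card_subtype_notMem_add_fv hLK 0
  have hE := card_subtype_notMem_add_fv hLK 1
  have heuler := hK.2
  unfold Matrix.rank at hrank
  omega

end LowerBound

section Bipartite

variable {B : Finset (Finset ℕ)} {col : ℕ → Bool}

lemma exists_mem_ne_of_even_card_filter {e : Finset ℕ} (he : e ∈ B) {x : ℕ} (hx : x ∈ e)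
    (heven : Even #{e ∈ B | x ∈ e}) : ∃ e' ∈ B, x ∈ e' ∧ e' ≠ e := by
  have hpos : 0 < #{e ∈ B | x ∈ e} := card_pos.2 ⟨e, mem_filter.2 ⟨he, hx⟩⟩
  have h1 : 1 < #{e ∈ B | x ∈ e} := by obtain ⟨k, hk⟩ := heven; omega
  obtain ⟨e', he', hne⟩ := exists_mem_ne h1 e
  exact ⟨e', (mem_filter.1 he').1, (mem_filter.1 he').2, hne⟩

lemma exists_eq_pair_of_mem {e : Finset ℕ} (he : ∃ x y, col x ≠ col y ∧ e = {x, y}) {a : ℕ}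
    (ha : a ∈ e) : ∃ b, col a ≠ col b ∧ e = {a, b} := by
  obtain ⟨x, y, hxy, rfl⟩ := he
  rcases mem_insert.1 ha with rfl | ha
  · exact ⟨y, hxy, rfl⟩
  · rw [mem_singleton.1 ha]
    exact ⟨x, hxy.symm, pair_comm x y⟩

lemma four_le_card_of_even_degree (hB : ∀ e ∈ B, ∃ x y, col x ≠ col y ∧ e = {x, y})
    (heven : ∀ x, Even #{e ∈ B | x ∈ e}) (hne : B.Nonempty) : 4 ≤ #B := by
  -- Besides `{a, b}`: a second edge `{a, b'}` at `a`, a second edge `{b, a'}` at `b` and a second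
  -- edge `e₃` at `b'`; the colouring keeps these four apart.
  obtain ⟨e₀, he₀⟩ := hne
  obtain ⟨a, b, hab, rfl⟩ := hB _ he₀
  obtain ⟨e₁, he₁, hae₁, h10⟩ := exists_mem_ne_of_even_card_filter he₀ (by simp) (heven a)
  obtain ⟨b', hab', rfl⟩ := exists_eq_pair_of_mem (hB e₁ he₁) hae₁
  obtain ⟨e₂, he₂, hbe₂, h20⟩ := exists_mem_ne_of_even_card_filter he₀ (by simp) (heven b)
  obtain ⟨a', hba', rfl⟩ := exists_eq_pair_of_mem (hB e₂ he₂) hbe₂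
  obtain ⟨e₃, he₃, hbe₃, h31⟩ := exists_mem_ne_of_even_card_filter he₁ (by simp) (heven b')
  have hb'b : b' ≠ b := by rintro rfl; exact h10 rfl
  have hb'a' : b' ≠ a' := by
    rintro rfl
    revert hab hab' hba'
    cases col a <;> cases col b <;> cases col b' <;> simp
  have h30 : e₃ ≠ {a, b} := by
    rintro rfl
    simp only [mem_insert, mem_singleton, hb'b, or_false] at hbe₃
    exact hab' (hbe₃ ▸ rfl)
  have h32 : e₃ ≠ {b, a'} := by rintro rfl; simp [hb'b, hb'a'] at hbe₃
  have h21 : ({b, a'} : Finset ℕ) ≠ {a, b'} := by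
    intro h
    have : a ∈ ({b, a'} : Finset ℕ) := h ▸ mem_insert_self a _
    rcases mem_insert.1 this with h' | h'
    · exact hab (h' ▸ rfl)
    · exact h20 (by rw [← mem_singleton.1 h', pair_comm])
  calc 4 = #{e₃, {a, b'}, {b, a'}, {a, b}} := by
        rw [card_insert_of_notMem (by simp [h31, h32, h30]),
          card_insert_of_notMem (by simp [h21.symm, h10]), card_pair h20]
    _ ≤ #B := card_le_card (by simp [insert_subset_iff, *])

end Bipartite

section UpperBound

variable {K L : Finset (Finset ℕ)}

def edgeSupport (y : faces K 1 → ZMod 2) : Finset (Finset ℕ) :=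
  ({e | y e ≠ 0} : Finset (faces K 1)).map (Function.Embedding.subtype _)

lemma even_card_filter_edgeSupport (hK : SC K) {y : faces K 1 → ZMod 2}
    (hy : boundaryMatrix K 0 *ᵥ y = 0) (x : ℕ) : Even #{e ∈ edgeSupport y | x ∈ e} := by
  by_cases hx : {x} ∈ K
  · have h := congrFun hy ⟨{x}, mem_faces.2 ⟨hx, rfl⟩⟩
    rw [boundaryMatrix_mulVec_apply, Pi.zero_apply,
      sum_congr rfl fun e _ => ZMod.two_eq_ite (y e), sum_boole, ZMod.natCast_eq_zero_iff_even,
      filter_filter] at h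
    rw [edgeSupport, filter_map, card_map, filter_filter]
    convert h using 3
    simp [and_comm]
  · rw [card_eq_zero.2 (filter_eq_empty_iff.2 fun e he hxe => hx ?_)]
    · exact Even.zero
    obtain ⟨e, -, rfl⟩ := mem_map.1 he
    exact hK.mem_of_subset (mem_faces.1 e.2).1 (singleton_subset_iff.2 hxe) (singleton_nonempty x)

noncomputable def componentBoundary (q : (dualGraph K L).ConnectedComponent) :
    faces K 1 → ZMod 2 :=
  boundaryMatrix K 1 *ᵥ q.supp.indicator 1

namespace Surface2

variable (hS : Surface2 K)
include hS

lemma componentBoundary_eq_zero (q : (dualGraph K L).ConnectedComponent) {e : faces K 1}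
    (he : e.1 ∉ L) : componentBoundary q e = 0 := by
  classical
  obtain ⟨t, t', htt, hpair⟩ := card_eq_two.1 (hS.card_filter_superset_eq_two e)
  have hsub : ∀ s ∈ ({t, t'} : Finset (faces K 2)), e.1 ⊆ s.1 := fun s hs => by
    rw [← hpair] at hs
    exact (mem_filter.1 hs).2
  have hq : t ∈ q.supp ↔ t' ∈ q.supp := by
    simp only [SimpleGraph.ConnectedComponent.mem_supp_iff,
      SimpleGraph.ConnectedComponent.sound (dualGraph_reachable e.2 he (hsub t (by simp))
        (hsub t' (by simp)))]
  rw [componentBoundary, boundaryMatrix_mulVec_apply, hpair, sum_pair htt, Set.indicator_apply,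
    Set.indicator_apply]
  simp only [hq]
  exact CharTwo.add_self_eq_zero _

lemma componentBoundary_ne_zero {q q' : (dualGraph K L).ConnectedComponent} (hqq : q ≠ q') :
    componentBoundary q ≠ 0 := by
  intro h0
  obtain ⟨t, ht⟩ := q.nonempty_supp
  obtain ⟨t', ht'⟩ := q'.nonempty_supp
  have ht'q : t' ∉ q.supp := fun h => hqq (h.symm.trans ht')
  have := hS.apply_eq_of_reachable (L := ∅) (fun e _ => congrFun h0 e)
    (hS.dualGraph_preconnected t t')
  simp [Set.indicator_of_mem ht, Set.indicator_of_notMem ht'q] at this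

lemma four_le_card_edgeSupport_componentBoundary {col : ℕ → Bool}
    (hcol : IsProperColouring L col) {q q' : (dualGraph K L).ConnectedComponent} (hqq : q ≠ q') :
    4 ≤ #(edgeSupport (componentBoundary q)) := by
  refine four_le_card_of_even_degree (col := col) ?_ (even_card_filter_edgeSupport hS.1 ?_) ?_
  · intro e he
    obtain ⟨e, hes, rfl⟩ := mem_map.1 he
    have heL : e.1 ∈ L :=
      by_contra fun h => (mem_filter.1 hes).2 (hS.componentBoundary_eq_zero q h)
    obtain ⟨x, x', hxx', hx⟩ := card_eq_two.1 (mem_faces.1 e.2).2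
    exact ⟨x, x', fun h => hxx' (hcol _ heL x (by simp [hx]) x' (by simp [hx]) h), hx⟩
  · rw [componentBoundary, mulVec_mulVec, boundaryMatrix_mul_boundaryMatrix hS.1, zero_mulVec]
  · obtain ⟨e, he⟩ := Function.ne_iff.1 (hS.componentBoundary_ne_zero hqq)
    exact ⟨e.1, mem_map_of_mem _ (mem_filter.2 ⟨mem_univ e, he⟩)⟩

open Classical in
lemma sum_card_edgeSupport_componentBoundary_le :
    ∑ q : (dualGraph K L).ConnectedComponent, #(edgeSupport (componentBoundary q)) ≤
      2 * fv L 1 := by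
  let EL : Finset (faces K 1) := {e | e.1 ∈ L}
  have hq : ∀ q : (dualGraph K L).ConnectedComponent, #(edgeSupport (componentBoundary q)) ≤
      ∑ e ∈ EL, #{t | e.1 ⊆ t.1 ∧ t ∈ q.supp} := by
    intro q
    rw [edgeSupport, card_map, card_eq_sum_ones]
    refine (sum_le_sum fun e he => card_pos.2 ?_).trans (sum_le_sum_of_subset fun e he =>
      mem_filter.2 ⟨mem_univ _, by_contra fun h =>
        (mem_filter.1 he).2 (hS.componentBoundary_eq_zero q h)⟩)
    obtain ⟨t, ht, hzt⟩ := exists_ne_zero_of_sum_ne_zero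
      (by rw [← boundaryMatrix_mulVec_apply]; exact (mem_filter.1 he).2)
    exact ⟨t, mem_filter.2 ⟨mem_univ _, (mem_filter.1 ht).2,
      by_contra fun h => hzt (Set.indicator_of_notMem h _)⟩⟩
  have hfiber : ∀ e : faces K 1,
      ∑ q : (dualGraph K L).ConnectedComponent, #{t | e.1 ⊆ t.1 ∧ t ∈ q.supp} = 2 := by
    intro e
    refine Eq.trans ?_ (hS.card_filter_superset_eq_two e)
    rw [card_eq_sum_card_fiberwise (f := (dualGraph K L).connectedComponentMk) (t := univ)
      fun _ _ => mem_univ _]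
    simp only [filter_filter, SimpleGraph.ConnectedComponent.mem_supp_iff]
  calc _ ≤ ∑ q : (dualGraph K L).ConnectedComponent, ∑ e ∈ EL, #{t | e.1 ⊆ t.1 ∧ t ∈ q.supp} :=
        sum_le_sum fun q _ => hq q
    _ = ∑ e ∈ EL, ∑ q : (dualGraph K L).ConnectedComponent, #{t | e.1 ⊆ t.1 ∧ t ∈ q.supp} :=
        sum_comm
    _ = ∑ e ∈ EL, 2 := sum_congr rfl fun e _ => hfiber e
    _ = 2 * #EL := by rw [sum_const, smul_eq_mul, mul_comm]
    _ ≤ 2 * fv L 1 := by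
        refine Nat.mul_le_mul_left 2 ?_
        rw [card_filter_coe_sort (faces K 1) (· ∈ L), fv_eq_card_faces]
        exact card_le_card fun e he =>
          mem_faces.2 ⟨(mem_filter.1 he).2, (mem_faces.1 (mem_filter.1 he).1).2⟩

theorem two_mul_card_connectedComponent_le {col : ℕ → Bool} (hcol : IsProperColouring L col)
    (hC : 1 < Nat.card (dualGraph K L).ConnectedComponent) :
    2 * Nat.card (dualGraph K L).ConnectedComponent ≤ fv L 1 := by
  classical
  rw [Nat.card_eq_fintype_card] at hC ⊢
  have hfour : ∀ q : (dualGraph K L).ConnectedComponent,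
      4 ≤ #(edgeSupport (componentBoundary q)) := fun q => by
    obtain ⟨q', hq'⟩ := Fintype.exists_ne_of_one_lt_card hC q
    exact hS.four_le_card_edgeSupport_componentBoundary hcol hq'.symm
  have hsum := (sum_le_sum fun q _ => hfour q).trans hS.sum_card_edgeSupport_componentBoundary_le
  rw [sum_const, card_univ, smul_eq_mul] at hsum
  omega

end Surface2

theorem TriS2.fv_one_add_four_le (hK : TriS2 K) (hL : SC L) (hLK : L ⊆ K) {col : ℕ → Bool}
    (hcol : IsProperColouring L col) (h3 : 3 ≤ fv L 0) : fv L 1 + 4 ≤ 2 * fv L 0 := by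
  obtain ⟨v, hv⟩ := card_pos.1 (show 0 < #(faces L 0) by rw [← fv_eq_card_faces]; omega)
  obtain ⟨w, rfl⟩ := card_eq_one.1 (mem_faces.1 hv).2
  have hlow := hK.fv_one_add_two_le hL hLK (mem_faces.1 hv).1
  by_cases hC : 1 < Nat.card (dualGraph K L).ConnectedComponent
  · have := hK.1.two_mul_card_connectedComponent_le hcol hC
    omega
  · omega

end UpperBound

lemma sc_K33 : SC K33 := by
  unfold SC K33 sclosure
  decide

lemma K33_image_isProperColouring {g : ℕ → ℕ} (hg : Function.Injective g) :
    IsProperColouring (K33.image (image g)) fun x => decide (x ∈ (range 3).image g) := by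
  have hK33 : ∀ s ∈ K33, ∀ a ∈ s, ∀ b ∈ s, (a < 3 ↔ b < 3) → a = b := by decide
  intro e he x hx x' hx' hcol
  obtain ⟨s, hs, rfl⟩ := mem_image.1 he
  obtain ⟨a, ha, rfl⟩ := mem_image.1 hx
  obtain ⟨b, hb, rfl⟩ := mem_image.1 hx'
  simp only [hg.mem_finset_image, mem_range, decide_eq_decide] at hcol
  rw [hK33 s hs a ha b hb hcol]

/-- `K₃,₃` is not planar: no copy of `K₃,₃` is a subcomplex of any
triangulation of the 2-sphere. -/
theorem K33_not_planar (K : Finset (Finset ℕ)) (hK : TriS2 K)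
    (g : ℕ → ℕ) (hg : Function.Injective g) :
    ¬ K33.image (Finset.image g) ⊆ K := by
  intro hsub
  have hbound := hK.fv_one_add_four_le (sc_K33.image g) hsub (K33_image_isProperColouring hg)
    (by rw [fv_image hg]; decide)
  rw [fv_image hg, fv_image hg] at hbound
  exact absurd hbound (by decide)
end

section
/- The boundary complex of the icosahedron has no induced cycle of length congruent to 1 modulo 3. -/
/-- The boundary complex of the icosahedron, on the 12 vertices
`0,…,5` and `0' = 6, 1' = 7, …, 5' = 11`, with the 20 triangles
012, 015, 023, 034, 045, 124′, 153′, 13′4′, 235′, 24′5′, 341′, 31′5′, 452′,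
41′2′, 52′3′, 0′1′2′, 0′1′5′, 0′2′3′, 0′3′4′, 0′4′5′. -/
def Icosa : Finset (Finset ℕ) :=
  sclosure {{0, 1, 2}, {0, 1, 5}, {0, 2, 3}, {0, 3, 4}, {0, 4, 5},
            {1, 2, 10}, {1, 5, 9}, {1, 9, 10}, {2, 3, 11}, {2, 10, 11},
            {3, 4, 7}, {3, 7, 11}, {4, 5, 8}, {4, 7, 8}, {5, 8, 9},
            {6, 7, 8}, {6, 7, 11}, {6, 8, 9}, {6, 9, 10}, {6, 10, 11}}

/-- `g 0, …, g (n-1)` is an induced `n`-cycle in the complex `K`: its vertices are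
vertices of `K` and the induced subcomplex of `K` on them is exactly the cycle. -/
def IsInducedCycle (K : Finset (Finset ℕ)) (n : ℕ) (g : ℕ → ℕ) : Prop :=
  3 ≤ n ∧ Set.InjOn g (Set.Iio n) ∧ (∀ i < n, ({g i} : Finset ℕ) ∈ K) ∧
    K.filter (fun s => s ⊆ (Finset.range n).image g) = cycleOn n g

/-!
An induced `n`-cycle `g 0, …, g (n-1)` of a complex consists of the induced path
`g (n-2), …, g 0` on `n - 1` vertices together with one further vertex `g (n-1)` adjacent to
exactly the two ends of that path. Induced paths can be enumerated by growing them one vertex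
at a time, so for the icosahedron (12 vertices, hence `n ≤ 12`) the claim reduces to a finite
search, which shows that no induced path on 3, 6 or 9 vertices closes up in this way.
-/

section InducedCycle

variable {K : Finset (Finset ℕ)} {n : ℕ} {g : ℕ → ℕ}

theorem IsInducedCycle.pair_mem_iff (h : IsInducedCycle K n g) {i j : ℕ} (hi : i < n)
    (hj : j < n) (hij : i ≠ j) :
    ({g i, g j} : Finset ℕ) ∈ K ↔ j = (i + 1) % n ∨ i = (j + 1) % n := by
  obtain ⟨hn, hinj, -, hK⟩ := h
  have hsucc : ∀ a, (a + 1) % n < n := fun a => Nat.mod_lt _ (by omega)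
  have edge_mem : ∀ a < n, ({g a, g ((a + 1) % n)} : Finset ℕ) ∈ K := fun a ha => by
    have : ({g a, g ((a + 1) % n)} : Finset ℕ) ∈ cycleOn n g :=
      Finset.mem_union_right _ (Finset.mem_image_of_mem _ (Finset.mem_range.2 ha))
    rw [← hK] at this
    exact (Finset.mem_filter.1 this).1
  constructor
  · intro hmem
    have hsub : ({g i, g j} : Finset ℕ) ⊆ (Finset.range n).image g := by
      simp only [Finset.insert_subset_iff, Finset.singleton_subset_iff]
      exact ⟨Finset.mem_image_of_mem _ (Finset.mem_range.2 hi),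
        Finset.mem_image_of_mem _ (Finset.mem_range.2 hj)⟩
    have hcyc : ({g i, g j} : Finset ℕ) ∈ cycleOn n g := by
      rw [← hK]; exact Finset.mem_filter.2 ⟨hmem, hsub⟩
    have hne : g i ≠ g j := fun e => hij (hinj hi hj e)
    rcases Finset.mem_union.1 hcyc with hvertex | hedge
    · obtain ⟨k, -, hk⟩ := Finset.mem_image.1 hvertex
      have := congrArg Finset.card hk
      rw [Finset.card_singleton, Finset.card_pair hne] at this
      omega
    · obtain ⟨k, hk, hkij⟩ := Finset.mem_image.1 hedge
      have hk : k < n := Finset.mem_range.1 hk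
      have hkij := congrArg ((↑) : Finset ℕ → Set ℕ) hkij
      simp only [Finset.coe_pair] at hkij
      rcases Set.pair_eq_pair_iff.1 hkij with ⟨hki, hkj⟩ | ⟨hkj, hki⟩
      · rw [← hinj hk hi hki, ← hinj (hsucc k) hj hkj]; exact Or.inl rfl
      · rw [← hinj hk hj hkj, ← hinj (hsucc k) hi hki]; exact Or.inr rfl
  · rintro (rfl | rfl)
    · exact edge_mem i hi
    · rw [Finset.pair_comm]; exact edge_mem j hj

theorem IsInducedCycle.le_card {S : Finset ℕ} (h : IsInducedCycle K n g)
    (hS : ∀ s ∈ K, s ⊆ S) : n ≤ S.card := by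
  obtain ⟨-, hinj, hvert, -⟩ := h
  have himage : (Finset.range n).image g ⊆ S := by
    intro x hx
    obtain ⟨i, hi, rfl⟩ := Finset.mem_image.1 hx
    exact hS _ (hvert i (Finset.mem_range.1 hi)) (Finset.mem_singleton_self _)
  have hcard : ((Finset.range n).image g).card = n := by
    rw [Finset.card_image_of_injOn (by rwa [Finset.coe_range]), Finset.card_range]
  exact hcard ▸ Finset.card_le_card himage

end InducedCycle

namespace InducedPathSearch

variable (adj : ℕ → ℕ → Bool) (V : List ℕ)

/-- Paths are stored newest vertex first, so `inducedPaths adj V m` lists the induced paths on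
`m` vertices of `V`, each reversed. -/
def extend : List ℕ → List (List ℕ)
  | [] => V.map ([·])
  | a :: t => (V.filter fun w => adj w a && !(a :: t).contains w && t.all (!adj w ·)).map
      (· :: a :: t)

def inducedPaths : ℕ → List (List ℕ)
  | 0 => [[]]
  | m + 1 => (inducedPaths m).flatMap (extend adj V)

/-- The path `a :: t` closes up to an induced cycle through a new vertex adjacent, besides `a`,
to exactly the last vertex of `t`. -/
def closes : List ℕ → Bool
  | [] => false
  | a :: t => V.any fun w =>
      adj w a && !(a :: t).contains w && t.all fun v => adj w v == (v == t.getLastD a)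

def hasInducedCycle (n : ℕ) : Bool :=
  (inducedPaths adj V (n - 1)).any (closes adj V)

variable {adj V}

theorem map_range_succ_reverse (g : ℕ → ℕ) (m : ℕ) :
    (List.range (m + 1)).reverse.map g = g m :: (List.range m).reverse.map g := by
  simp [List.range_succ]

theorem getLastD_map_range_reverse (g : ℕ → ℕ) (m d : ℕ) :
    ((List.range (m + 1)).reverse.map g).getLastD d = g 0 := by
  simp [List.getLastD_eq_getLast?, List.getLast?_reverse, List.range_succ_eq_map]

theorem contains_map_range_reverse_eq_false {g : ℕ → ℕ} {m N : ℕ}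
    (hinj : Set.InjOn g (Set.Iio N)) (hm : m < N) :
    ((List.range m).reverse.map g).contains (g m) = false := by
  refine Bool.eq_false_iff.2 fun hc => ?_
  obtain ⟨j, hj, hjm⟩ := List.mem_map.1 (List.contains_iff_mem.1 hc)
  rw [List.mem_reverse, List.mem_range] at hj
  have := hinj (Set.mem_Iio.2 (by omega)) (Set.mem_Iio.2 hm) hjm
  omega

theorem map_range_reverse_mem_inducedPaths {g : ℕ → ℕ} {m : ℕ} (hV : ∀ i < m, g i ∈ V)
    (hinj : Set.InjOn g (Set.Iio m))
    (hadj : ∀ i < m, ∀ j < m, i ≠ j → (adj (g i) (g j) = true ↔ j = i + 1 ∨ i = j + 1)) :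
    (List.range m).reverse.map g ∈ inducedPaths adj V m := by
  induction m with
  | zero => simp [inducedPaths]
  | succ m ih =>
    refine List.mem_flatMap.2 ⟨_, ih (fun i hi => hV i (by omega))
      (hinj.mono (Set.Iio_subset_Iio (by omega)))
      (fun i hi j hj => hadj i (by omega) j (by omega)), ?_⟩
    rw [map_range_succ_reverse]
    cases m with
    | zero => exact List.mem_map.2 ⟨g 0, hV 0 (by omega), rfl⟩
    | succ k =>
      rw [map_range_succ_reverse]
      refine List.mem_map.2 ⟨g (k + 1), List.mem_filter.2 ⟨hV _ (by omega), ?_⟩, rfl⟩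
      have h_head : adj (g (k + 1)) (g k) = true :=
        (hadj _ (by omega) _ (by omega) (by omega)).2 (by omega)
      have h_new : (g k :: (List.range k).reverse.map g).contains (g (k + 1)) = false := by
        rw [← map_range_succ_reverse]; exact contains_map_range_reverse_eq_false hinj (by omega)
      have h_rest : ((List.range k).reverse.map g).all (!adj (g (k + 1)) ·) = true := by
        simp only [List.all_eq_true, List.mem_map, List.mem_reverse, List.mem_range]
        rintro _ ⟨j, hj, rfl⟩
        rw [Bool.not_eq_true', ← Bool.not_eq_true, hadj _ (by omega) _ (by omega) (by omega)]
        omega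
      simp only [h_head, h_new, h_rest, Bool.not_false, Bool.and_self]

theorem closes_cons_eq_true {a w : ℕ} {t : List ℕ} (hw : w ∈ V)
    (h_new : (a :: t).contains w = false) (h_head : adj w a = true)
    (h_rest : ∀ v ∈ t, adj w v = true ↔ v = t.getLastD a) :
    closes adj V (a :: t) = true := by
  refine List.any_eq_true.2 ⟨w, hw, ?_⟩
  have h_all : t.all (fun v => adj w v == (v == t.getLastD a)) = true :=
    List.all_eq_true.2 fun v hv => by
      rw [beq_iff_eq, Bool.eq_iff_iff, beq_iff_eq]; exact h_rest v hv
  rw [h_head, h_new, h_all]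
  rfl

theorem hasInducedCycle_eq_true {g : ℕ → ℕ} {n : ℕ} (hn : 3 ≤ n) (hV : ∀ i < n, g i ∈ V)
    (hinj : Set.InjOn g (Set.Iio n))
    (hadj : ∀ i < n, ∀ j < n, i ≠ j →
      (adj (g i) (g j) = true ↔ j = (i + 1) % n ∨ i = (j + 1) % n)) :
    hasInducedCycle adj V n = true := by
  have hmod : ∀ i, i + 1 < n → (i + 1) % n = i + 1 := fun i hi => Nat.mod_eq_of_lt hi
  have hpath : (List.range (n - 1)).reverse.map g ∈ inducedPaths adj V (n - 1) :=
    map_range_reverse_mem_inducedPaths (fun i hi => hV i (by omega))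
      (hinj.mono (Set.Iio_subset_Iio (by omega))) fun i hi j hj hij => by
        rw [hadj i (by omega) j (by omega) hij, hmod i (by omega), hmod j (by omega)]
  refine List.any_eq_true.2 ⟨_, hpath, ?_⟩
  obtain ⟨k, hk⟩ : ∃ k, n = k + 3 := ⟨n - 3, by omega⟩
  subst hk
  have hwrap : (k + 2 + 1) % (k + 3) = 0 := Nat.mod_self _
  rw [show k + 3 - 1 = k + 2 from rfl, map_range_succ_reverse]
  refine closes_cons_eq_true (w := g (k + 2)) (hV _ (by omega)) ?_ ?_ fun v hv => ?_
  · rw [← map_range_succ_reverse]; exact contains_map_range_reverse_eq_false hinj (by omega)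
  · exact (hadj _ (by omega) _ (by omega) (by omega)).2 (.inr (hmod _ (by omega)).symm)
  · obtain ⟨j, hj, rfl⟩ := List.mem_map.1 hv
    rw [List.mem_reverse, List.mem_range] at hj
    rw [getLastD_map_range_reverse, hadj _ (by omega) _ (by omega) (by omega), hwrap,
      hmod j (by omega), hinj.eq_iff (Set.mem_Iio.2 (by omega)) (Set.mem_Iio.2 (by omega))]
    omega

end InducedPathSearch

open InducedPathSearch

def icosaNeighbours : ℕ → List ℕ
  | 0 => [1, 2, 3, 4, 5] | 1 => [0, 2, 5, 9, 10] | 2 => [0, 1, 3, 10, 11]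
  | 3 => [0, 2, 4, 7, 11] | 4 => [0, 3, 5, 7, 8] | 5 => [0, 1, 4, 8, 9]
  | 6 => [7, 8, 9, 10, 11] | 7 => [3, 4, 6, 8, 11] | 8 => [4, 5, 6, 7, 9]
  | 9 => [1, 5, 6, 8, 10] | 10 => [1, 2, 6, 9, 11] | 11 => [2, 3, 6, 7, 10]
  | _ => []

def icosaAdj (x y : ℕ) : Bool := (icosaNeighbours x).contains y

set_option maxRecDepth 100000 in
theorem Icosa_subset_range : ∀ s ∈ Icosa, s ⊆ Finset.range 12 := by decide

set_option maxRecDepth 100000 in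
theorem icosaAdj_iff : ∀ x < 12, ∀ y < 12, x ≠ y →
    (icosaAdj x y = true ↔ ({x, y} : Finset ℕ) ∈ Icosa) := by decide

set_option maxRecDepth 100000 in
theorem icosa_hasInducedCycle_eq_false :
    ∀ n < 13, n % 3 = 1 → hasInducedCycle icosaAdj (List.range 12) n = false := by decide

/-- the boundary complex of the icosahedron has no induced cycle of
length congruent to 1 modulo 3. -/
theorem icosa_no_induced_cycle_one_mod_three (n : ℕ) (g : ℕ → ℕ)
    (h : IsInducedCycle Icosa n g) : n % 3 ≠ 1 := by
  obtain ⟨hn, hinj, hvert, -⟩ := id h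
  have hV : ∀ i < n, g i < 12 := fun i hi =>
    Finset.mem_range.1 (Icosa_subset_range _ (hvert i hi) (Finset.mem_singleton_self _))
  have hcycle : hasInducedCycle icosaAdj (List.range 12) n = true :=
    hasInducedCycle_eq_true hn (fun i hi => List.mem_range.2 (hV i hi)) hinj
      fun i hi j hj hij => by
        rw [icosaAdj_iff _ (hV i hi) _ (hV j hj) (fun e => hij (hinj hi hj e)),
          h.pair_mem_iff hi hj hij]
  have hn12 : n ≤ 12 := h.le_card Icosa_subset_range
  intro hmod
  rw [icosa_hasInducedCycle_eq_false n (by omega) hmod] at hcycle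
  exact Bool.false_ne_true hcycle
end

section
/- If a triangulated closed 3-manifold X with n vertices is stacked and neighbourly, then (n - 4)(n - 5) \equiv 0 \pmod{20} and n = (9 + \sqrt{80k + 1})/2 where k = (n-4)(n-5)/20; moreover, 80k+1 is an odd perfect square. -/
/-- if a stacked neighbourly triangulated closed 3-manifold with `n ≥ 5`
vertices arises from a stacked 3-sphere `S` by `k` handle additions
(`f₀(S) = n + 4k`, `f₁(S) = C(n,2) + 6k = 4 f₀(S) - 10`), then `20 ∣ (n-4)(n-5)`,
indeed `(n-4)(n-5) = 20k`, `80k + 1 = (2n-9)²` is an odd perfect square, and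
`n = (9 + √(80k+1))/2`. -/
theorem stacked_neighbourly_vertex_count (n k f0S f1S : ℕ)
    (h5 : 5 ≤ n)
    (hv : f0S = n + 4 * k)
    (he : f1S = n.choose 2 + 6 * k)
    (hstacked : f1S = 4 * f0S - 10) :
    20 ∣ (n - 4) * (n - 5) ∧
      (n - 4) * (n - 5) = 20 * k ∧
      80 * k + 1 = (2 * n - 9) ^ 2 ∧
      Odd (2 * n - 9) ∧
      2 * n = 9 + Nat.sqrt (80 * k + 1) := by
    obtain ⟨a, rfl⟩ : ∃ a, n = a + 5 := ⟨n - 5, by omega⟩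
    rw [Nat.choose_two_right] at he
    have hmul : (a + 5) * (a + 5 - 1) = a * a + 9 * a + 20 := by
      have h4 : a + 5 - 1 = a + 4 := by omega
      rw [h4]; ring
    rw [hmul] at he
    have hdiv : (a * a + 9 * a + 20) / 2 = (a * a + a) / 2 + 4 * a + 10 := by omega
    have heven : 2 ∣ a * a + a := by
      rcases Nat.even_or_odd a with h | h <;> rcases h with ⟨b, hb⟩ <;> subst hb
      · exact ⟨2*b*b + b, by ring⟩
      · exact ⟨2*b*b + 3*b + 1, by ring⟩
    obtain ⟨c, hc⟩ := heven
    have hk : a * a + a = 20 * k := by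
      rw [hv, he] at hstacked
      omega
    have h1 : (a + 5 - 4) * (a + 5 - 5) = 20 * k := by
      have : (a + 5 - 4) * (a + 5 - 5) = a * a + a := by
        have : a + 5 - 4 = a + 1 := by omega
        rw [this]; have : a + 5 - 5 = a := by omega
        rw [this]; ring
      omega
    have h2 : 2 * (a + 5) - 9 = 2 * a + 1 := by omega
    refine ⟨⟨k, h1⟩, h1, ?_, ?_, ?_⟩
    · rw [h2]; nlinarith [hk]
    · rw [h2]; exact ⟨a, by ring⟩
    · have : 80 * k + 1 = (2 * a + 1) ^ 2 := by nlinarith [hk]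
      rw [this, Nat.sqrt_eq']
      omega
end
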